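/- Let s ∈ [0,1], θ₁, θ₂ ∈ ℝ, and z₁, z₂ ∈ [−1,1]. Set l = z₁ + 2z₂ + 1, p = 2(1 + z₂), and q = θ₁ − θ₂. Then (1−s)z₁ + s·z₂ + 2(1−s)·s·√((1 − z₁²)(1 − z₂²))·cos(θ₁ − θ₂) = A(p) + cos(q)·√(B(p)). In particular 4(1 − z₁²)(1 − z₂²) = p(p−l)(p−4)(p−2−l) under this substitution. -/
import Mathlib


/-- `A_s^l(p) = l + 1 − p − 2s − l·s + (3/2)·s·p`. -/
noncomputable def redA (s l p : ℝ) : ℝ := l + 1 - p - 2 * s - l * s + 3 / 2 * s * p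

/-- `B_s^l(p) = s²(1−s)²·p·(p−l)·(p−4)·(p−2−l)`. -/
noncomputable def redB (s l p : ℝ) : ℝ :=
  s ^ 2 * (1 - s) ^ 2 * p * (p - l) * (p - 4) * (p - 2 - l)

/-- With `l = z₁ + 2z₂ + 1`, `p = 2(1 + z₂)`, `q = θ₁ − θ₂`, the Hamiltonian
`(1−s)z₁ + s z₂ + 2(1−s)s √((1−z₁²)(1−z₂²)) cos(θ₁−θ₂)` equals the reduced Hamiltonian
`A(p) + cos(q)√(B(p))`; in particular `4(1−z₁²)(1−z₂²) = p(p−l)(p−4)(p−2−l)`. -/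
theorem reduced_hamiltonian_eq (s θ₁ θ₂ z₁ z₂ l p q : ℝ)
    (hs₀ : 0 ≤ s) (hs₁ : s ≤ 1)
    (hz₁ : z₁ ∈ Set.Icc (-1 : ℝ) 1) (hz₂ : z₂ ∈ Set.Icc (-1 : ℝ) 1)
    (hl : l = z₁ + 2 * z₂ + 1) (hp : p = 2 * (1 + z₂)) (hq : q = θ₁ - θ₂) :
    (1 - s) * z₁ + s * z₂ +
        2 * (1 - s) * s * Real.sqrt ((1 - z₁ ^ 2) * (1 - z₂ ^ 2)) * Real.cos (θ₁ - θ₂) =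
      redA s l p + Real.cos q * Real.sqrt (redB s l p) ∧
    4 * ((1 - z₁ ^ 2) * (1 - z₂ ^ 2)) = p * (p - l) * (p - 4) * (p - 2 - l) := by
  subst hl hp hq
  have hc : (0:ℝ) ≤ 2 * (1 - s) * s := by nlinarith
  have hB : redB s (z₁ + 2 * z₂ + 1) (2 * (1 + z₂)) =
      (2 * (1 - s) * s) ^ 2 * ((1 - z₁ ^ 2) * (1 - z₂ ^ 2)) := by
    unfold redB; ring
  refine ⟨?_, by ring⟩
  rw [hB, Real.sqrt_mul (sq_nonneg _), Real.sqrt_sq hc]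
  unfold redA; ring
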